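/- Tail-part maximal bound: under the hypotheses below, if n₀ is such that 2 M_p Σ_{n=n₀}^{∞} n^{-p} ≤ ε δ, then with probability at least 1 − ε one has Σ_{i=n₀}^{n} |Z_i − E[Z_i | F_{i-1}]| ≤ 2nδ for all n ≥ n₀. -/

import Mathlib

/-!
On `{|X_i| > i}` one has `|X_i| ≤ i^{1-p} |X_i|^p`, so `E|Z_i| ≤ M_p i^{1-p}`, and since
conditional expectation is an `L¹` contraction, `E|Z_i - E[Z_i|F_{i-1}]| ≤ 2 M_p i^{1-p}`.
Hence `∑_{i ≥ n₀} |Z_i - E[Z_i|F_{i-1}]| / i` has expectation at most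
`2 M_p ∑_{i ≥ n₀} i^{-p} ≤ εδ`, and by Markov's inequality it is below `δ` outside an event of
probability at most `ε`. On the complement, `∑_{i=n₀}^n |Z_i - E[Z_i|F_{i-1}]|` is at most `n`
times that series, hence at most `nδ`.
-/

open MeasureTheory
open scoped ENNReal

namespace Real

lemma abs_le_rpow_mul_abs_rpow {x t p : ℝ} (hp : 1 ≤ p) (ht : 0 < t) (htx : t ≤ |x|) :
    |x| ≤ t ^ (1 - p) * |x| ^ p := by
  have hx : 0 < |x| := ht.trans_le htx
  calc |x| = |x| ^ (1 - p) * |x| ^ p := by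
        rw [← Real.rpow_add hx, sub_add_cancel, Real.rpow_one]
    _ ≤ t ^ (1 - p) * |x| ^ p := by
        gcongr ?_ * _
        exact Real.rpow_le_rpow_of_nonpos ht htx (by linarith)

end Real

namespace ENNReal

lemma le_natCast_mul_div_natCast {a : ℝ≥0∞} {i n : ℕ} (hi : i ≠ 0) (hin : i ≤ n) :
    a ≤ n * (a / i) :=
  calc a = i * (a / i) := (ENNReal.mul_div_cancel (by exact_mod_cast hi) (natCast_ne_top i)).symm
    _ ≤ n * (a / i) := by gcongr

lemma sum_Icc_le_mul_tsum_div {a : ℕ → ℝ≥0∞} {n₀ : ℕ} (hn₀ : 1 ≤ n₀) (n : ℕ) :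
    ∑ i ∈ Finset.Icc n₀ n, a i ≤ n * ∑' k, a (n₀ + k) / (n₀ + k : ℕ) :=
  calc ∑ i ∈ Finset.Icc n₀ n, a i ≤ ∑ i ∈ Finset.Icc n₀ n, n * (a i / i) :=
        Finset.sum_le_sum fun i hi ↦ by
          rw [Finset.mem_Icc] at hi
          exact le_natCast_mul_div_natCast (by omega) hi.2
    _ = n * ∑ k ∈ Finset.range (n + 1 - n₀), a (n₀ + k) / (n₀ + k : ℕ) := by
        rw [← Finset.mul_sum, ← Finset.Ico_add_one_right_eq_Icc, Finset.sum_Ico_eq_sum_range]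
    _ ≤ n * ∑' k, a (n₀ + k) / (n₀ + k : ℕ) := by gcongr; exact ENNReal.sum_le_tsum _

end ENNReal

lemma sum_Icc_abs_le_mul_of_tsum_enorm_div_le {x : ℕ → ℝ} {n₀ : ℕ} {δ : ℝ} (hn₀ : 1 ≤ n₀)
    (hδ : 0 ≤ δ) (hx : ∑' k, ‖x (n₀ + k)‖ₑ / (n₀ + k : ℕ) ≤ ENNReal.ofReal δ) (n : ℕ) :
    ∑ i ∈ Finset.Icc n₀ n, |x i| ≤ n * δ := by
  rw [← ENNReal.ofReal_le_ofReal_iff (by positivity), ENNReal.ofReal_mul (Nat.cast_nonneg _),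
    ENNReal.ofReal_natCast, ENNReal.ofReal_sum_of_nonneg fun _ _ ↦ abs_nonneg _]
  simp_rw [← Real.enorm_eq_ofReal_abs]
  exact (ENNReal.sum_Icc_le_mul_tsum_div hn₀ n).trans (by gcongr)

namespace MeasureTheory

variable {Ω : Type*} {m m0 : MeasurableSpace Ω} {μ : Measure Ω}

lemma one_sub_measure_le_of_compl_subset [IsProbabilityMeasure μ] {s t : Set Ω} (h : sᶜ ⊆ t) :
    1 - μ s ≤ μ t := by
  rw [tsub_le_iff_right, ← measure_univ (μ := μ)]
  exact (measure_mono fun ω _ ↦ (em' (ω ∈ s)).imp (@h ω) id).trans (measure_union_le _ _)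

lemma measure_tsum_ge_le_of_lintegral_le {f : ℕ → Ω → ℝ≥0∞} (hf : ∀ k, AEMeasurable (f k) μ)
    {c : ℕ → ℝ} (hc₀ : ∀ k, 0 ≤ c k) (hc : Summable c)
    (hfc : ∀ k, ∫⁻ ω, f k ω ∂μ ≤ ENNReal.ofReal (c k)) {ε δ : ℝ} (hε : 0 ≤ ε) (hδ : 0 < δ)
    (hcε : ∑' k, c k ≤ ε * δ) :
    μ {ω | ENNReal.ofReal δ ≤ ∑' k, f k ω} ≤ ENNReal.ofReal ε := by
  have hδ' : ENNReal.ofReal δ ≠ 0 := (ENNReal.ofReal_pos.2 hδ).ne'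
  calc μ {ω | ENNReal.ofReal δ ≤ ∑' k, f k ω}
      ≤ (∫⁻ ω, ∑' k, f k ω ∂μ) / ENNReal.ofReal δ :=
        meas_ge_le_lintegral_div (AEMeasurable.tsum hf) hδ' ENNReal.ofReal_ne_top
    _ ≤ ENNReal.ofReal (ε * δ) / ENNReal.ofReal δ := by
        gcongr
        calc ∫⁻ ω, ∑' k, f k ω ∂μ = ∑' k, ∫⁻ ω, f k ω ∂μ := lintegral_tsum hf
          _ ≤ ∑' k, ENNReal.ofReal (c k) := ENNReal.tsum_le_tsum hfc
          _ = ENNReal.ofReal (∑' k, c k) := (ENNReal.ofReal_tsum_of_nonneg hc₀ hc).symm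
          _ ≤ ENNReal.ofReal (ε * δ) := ENNReal.ofReal_le_ofReal hcε
    _ = ENNReal.ofReal ε := by
        rw [ENNReal.ofReal_mul hε, ENNReal.mul_div_cancel_right hδ' ENNReal.ofReal_ne_top]

lemma eLpNorm_one_sub_condExp_le {g : Ω → ℝ} (hg : AEStronglyMeasurable g μ) :
    eLpNorm (g - μ[g | m]) 1 μ ≤ 2 * eLpNorm g 1 μ :=
  calc eLpNorm (g - μ[g | m]) 1 μ ≤ eLpNorm g 1 μ + eLpNorm (μ[g | m]) 1 μ :=
        eLpNorm_sub_le hg integrable_condExp.aestronglyMeasurable le_rfl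
    _ ≤ eLpNorm g 1 μ + eLpNorm g 1 μ := by gcongr; exact eLpNorm_condExp_le_eLpNorm g le_rfl
    _ = 2 * eLpNorm g 1 μ := (two_mul _).symm

noncomputable def tailPart (f : Ω → ℝ) (t : ℝ) (ω : Ω) : ℝ :=
  if t < |f ω| then f ω else 0

lemma AEStronglyMeasurable.tailPart {f : Ω → ℝ} (hf : AEStronglyMeasurable f μ) (t : ℝ) :
    AEStronglyMeasurable (tailPart f t) μ :=
  (Measurable.ite (measurableSet_lt measurable_const measurable_abs) measurable_id
    measurable_const).comp_aemeasurable hf.aemeasurable |>.aestronglyMeasurable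

lemma eLpNorm_one_tailPart_le {f : Ω → ℝ} {p t : ℝ} (hp : 1 ≤ p) (ht : 0 < t)
    (hf : MemLp f (ENNReal.ofReal p) μ) :
    eLpNorm (tailPart f t) 1 μ ≤ ENNReal.ofReal (t ^ (1 - p) * ∫ ω, |f ω| ^ p ∂μ) := by
  have hfp : Integrable (fun ω ↦ |f ω| ^ p) μ := by
    simpa [ENNReal.toReal_ofReal (by linarith : 0 ≤ p)] using
      hf.integrable_norm_rpow (ENNReal.ofReal_pos.2 (by linarith)).ne' ENNReal.ofReal_ne_top
  have hpt (ω : Ω) : |tailPart f t ω| ≤ t ^ (1 - p) * |f ω| ^ p := by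
    unfold tailPart
    split_ifs with h
    · exact Real.abs_le_rpow_mul_abs_rpow hp ht h.le
    · rw [abs_zero]; positivity
  rw [eLpNorm_one_eq_lintegral_enorm, ← integral_const_mul,
    ofReal_integral_eq_lintegral_ofReal (hfp.const_mul _) (.of_forall fun ω ↦ by positivity)]
  exact lintegral_mono fun ω ↦ by
    rw [Real.enorm_eq_ofReal_abs]; exact ENNReal.ofReal_le_ofReal (hpt ω)

lemma lintegral_enorm_tailPart_sub_condExp_div_le {f : Ω → ℝ} {p t M : ℝ} (hp : 1 ≤ p)
    (ht : 0 < t) (hf : MemLp f (ENNReal.ofReal p) μ) (hM : ∫ ω, |f ω| ^ p ∂μ ≤ M) :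
    ∫⁻ ω, ‖tailPart f t ω - μ[tailPart f t | m] ω‖ₑ / ENNReal.ofReal t ∂μ ≤
      ENNReal.ofReal (2 * M * t ^ (-p)) := by
  have hM' : eLpNorm (tailPart f t) 1 μ ≤ ENNReal.ofReal (t ^ (1 - p) * M) :=
    (eLpNorm_one_tailPart_le hp ht hf).trans (ENNReal.ofReal_le_ofReal (by gcongr))
  calc ∫⁻ ω, ‖tailPart f t ω - μ[tailPart f t | m] ω‖ₑ / ENNReal.ofReal t ∂μ
      = eLpNorm (tailPart f t - μ[tailPart f t | m]) 1 μ / ENNReal.ofReal t := by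
        simp_rw [div_eq_mul_inv]
        rw [lintegral_mul_const' _ _ (ENNReal.inv_ne_top.2 (ENNReal.ofReal_pos.2 ht).ne'),
          eLpNorm_one_eq_lintegral_enorm]
        rfl
    _ ≤ 2 * ENNReal.ofReal (t ^ (1 - p) * M) / ENNReal.ofReal t := by
        gcongr
        exact (eLpNorm_one_sub_condExp_le (hf.1.tailPart t)).trans (by gcongr)
    _ = ENNReal.ofReal (2 * M * t ^ (-p)) := by
        rw [← ENNReal.ofReal_ofNat 2, ← ENNReal.ofReal_mul (by norm_num),
          ← ENNReal.ofReal_div_of_pos ht, Real.rpow_sub ht, Real.rpow_one, Real.rpow_neg ht.le]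
        congr 1
        field_simp

end MeasureTheory

theorem tail_part_maximal_bound_general
    {Ω : Type*} {m0 : MeasurableSpace Ω} {μ : Measure Ω} [IsProbabilityMeasure μ]
    (ℱ : Filtration ℕ m0) (X : ℕ → Ω → ℝ)
    (p Mp : ℝ) (hp : 1 < p)
    (hmem : ∀ n, MemLp (X n) (ENNReal.ofReal p) μ)
    (hMp : ∀ n, ∫ ω, |X n ω| ^ p ∂μ ≤ Mp)
    (Z : ℕ → Ω → ℝ)
    (hZ : ∀ n ω, Z n ω = if (n : ℝ) < |X n ω| then X n ω else 0)
    (ε δ : ℝ) (hε : 0 < ε) (hδ : 0 < δ)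
    (n₀ : ℕ) (hn₀ : 1 ≤ n₀)
    (hsum : 2 * Mp * ∑' n : ℕ, ((n₀ + n : ℕ) : ℝ) ^ (-p) ≤ ε * δ) :
    ENNReal.ofReal (1 - ε) ≤
      μ {ω | ∀ n, n₀ ≤ n →
        ∑ i ∈ Finset.Icc n₀ n, |Z i ω - (μ[Z i | ℱ (i - 1)]) ω| ≤ 2 * n * δ} := by
  obtain rfl : Z = fun i ↦ tailPart (X i) i := funext₂ hZ
  set d : ℕ → Ω → ℝ≥0∞ := fun k ω ↦ ‖tailPart (X (n₀ + k)) (n₀ + k : ℕ) ω -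
    μ[tailPart (X (n₀ + k)) (n₀ + k : ℕ) | ℱ (n₀ + k - 1)] ω‖ₑ / (n₀ + k : ℕ)
  have hMp₀ : 0 ≤ Mp := (integral_nonneg fun ω ↦ by positivity).trans (hMp 0)
  have hsummable : Summable fun k : ℕ ↦ ((n₀ + k : ℕ) : ℝ) ^ (-p) := by
    simpa [add_comm n₀] using
      (summable_nat_add_iff n₀).2 (Real.summable_nat_rpow.2 (by linarith : -p < -1))
  have hd_large : μ {ω | ENNReal.ofReal δ ≤ ∑' k, d k ω} ≤ ENNReal.ofReal ε :=
    measure_tsum_ge_le_of_lintegral_le (f := d)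
      (fun k ↦ (((hmem _).1.tailPart _).sub
        integrable_condExp.aestronglyMeasurable).enorm.div_const _)
      (fun k ↦ by positivity) (hsummable.mul_left (2 * Mp))
      (fun k ↦ by
        simpa only [ENNReal.ofReal_natCast] using lintegral_enorm_tailPart_sub_condExp_div_le
          (t := ((n₀ + k : ℕ) : ℝ)) (m := ℱ (n₀ + k - 1)) hp.le (by positivity)
          (hmem (n₀ + k)) (hMp (n₀ + k)))
      hε.le hδ (by rwa [tsum_mul_left])
  calc ENNReal.ofReal (1 - ε) = 1 - ENNReal.ofReal ε := by
        rw [ENNReal.ofReal_sub _ hε.le, ENNReal.ofReal_one]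
    _ ≤ 1 - μ {ω | ENNReal.ofReal δ ≤ ∑' k, d k ω} := by gcongr
    _ ≤ _ := by
        refine one_sub_measure_le_of_compl_subset fun ω hω n _ ↦ ?_
        simp only [Set.mem_compl_iff, Set.mem_ofPred_eq, not_le] at hω
        have := sum_Icc_abs_le_mul_of_tsum_enorm_div_le
          (x := fun i ↦ tailPart (X i) i ω - μ[tailPart (X i) i | ℱ (i - 1)] ω) hn₀ hδ.le hω.le n
        linarith [mul_nonneg (Nat.cast_nonneg (α := ℝ) n) hδ.le]

/-- Tail-part maximal bound: if `2 M_p ∑_{n ≥ n₀} n^{-p} ≤ ε δ`, then with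
probability at least `1 - ε`, `∑_{i=n₀}^n |Z_i − E[Z_i|F_{i-1}]| ≤ 2nδ` for all
`n ≥ n₀`. -/
theorem tail_part_maximal_bound
    {Ω : Type*} {m0 : MeasurableSpace Ω} {μ : Measure Ω} [IsProbabilityMeasure μ]
    (ℱ : Filtration ℕ m0) (X : ℕ → Ω → ℝ) (hadp : Adapted ℱ X)
    (p Mp : ℝ) (hp : 1 < p)
    (hmem : ∀ n, MemLp (X n) (ENNReal.ofReal p) μ)
    (hMp : ∀ n, ∫ ω, |X n ω| ^ p ∂μ ≤ Mp)
    (Z : ℕ → Ω → ℝ)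
    (hZ : ∀ n ω, Z n ω = if (n : ℝ) < |X n ω| then X n ω else 0)
    (ε δ : ℝ) (hε : 0 < ε) (hδ : 0 < δ)
    (n₀ : ℕ) (hn₀ : 1 ≤ n₀)
    (hsum : 2 * Mp * ∑' n : ℕ, ((n₀ + n : ℕ) : ℝ) ^ (-p) ≤ ε * δ) :
    ENNReal.ofReal (1 - ε) ≤
      μ {ω | ∀ n, n₀ ≤ n →
        ∑ i ∈ Finset.Icc n₀ n, |Z i ω - (μ[Z i | ℱ (i - 1)]) ω| ≤ 2 * n * δ} :=
  tail_part_maximal_bound_general ℱ X p Mp hp hmem hMp Z hZ ε δ hε hδ n₀ hn₀ hsum
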